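/- The truncated secondary Hochschild complex (C^•(A,B,ε), b') is acyclic: the maps s_n : C^n(A,B,ε) → C^{n-1}(A,B,ε) defined by (s_n f)(T) = (−1)^{n-1} f(T extended by appending the unit 1 ∈ A as a new last diagonal entry and 1 ∈ B in all new off-diagonal positions) form a contracting homotopy, i.e., s_{n+1} b'_n + b'_{n-1} s_n = id on C^n(A,B,ε). -/

import Mathlib

open scoped TensorProduct
open MulOpposite PiTensorProduct

noncomputable section

/-- Index set for the strictly upper triangular positions of an `m × m` matrix. -/
abbrev UT (m : ℕ) := {p : Fin m × Fin m // p.1 < p.2}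

/-- The tensor space `A^{⊗ m} ⊗ B^{⊗ m(m-1)/2}` in its matrix representation. -/
def TS (k A B : Type) [Field k] [Ring A] [Algebra k A] [CommRing B] [Algebra k B]
    (m : ℕ) : Type :=
  (⨂[k] _ : Fin m, A) ⊗[k] (⨂[k] _ : UT m, B)

variable (k A B : Type) [Field k] [Ring A] [Algebra k A] [CommRing B] [Algebra k B]

instance (m : ℕ) : AddCommGroup (TS k A B m) :=
  inferInstanceAs (AddCommGroup ((⨂[k] _ : Fin m, A) ⊗[k] (⨂[k] _ : UT m, B)))

instance (m : ℕ) : Module k (TS k A B m) :=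
  inferInstanceAs (Module k ((⨂[k] _ : Fin m, A) ⊗[k] (⨂[k] _ : UT m, B)))

/-- The secondary Hochschild cochain space `C^n(A,B,ε) = Hom_k(A^{⊗(n+1)} ⊗ B^{⊗ n(n+1)/2}, k)`. -/
abbrev Cc (n : ℕ) : Type := TS k A B (n + 1) →ₗ[k] k

/-- The pure tensor (generator) determined by diagonal entries `a` and
upper-triangular entries `β` (read at indices `< m`). -/
def gen (m : ℕ) (a : ℕ → A) (β : ℕ → ℕ → B) : TS k A B m :=
  (tprod k fun i : Fin m => a i) ⊗ₜ[k] (tprod k fun p : UT m => β p.1.1 p.1.2)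

/-- Diagonal of the matrix obtained by merging diagonal entries `i`, `i+1` via
`a_i a_{i+1} ε(b_{i,i+1})`. -/
def mergeA (ε : B →ₐ[k] A) (i : ℕ) (a : ℕ → A) (β : ℕ → ℕ → B) : ℕ → A :=
  fun j => if j < i then a j else if j = i then a i * a (i + 1) * ε (β i (i + 1)) else a (j + 1)

/-- Preimages of the index `p` under the monotone surjection collapsing `i` and `i+1`. -/
def preim (i p : ℕ) : Finset ℕ :=
  if p < i then {p} else if p = i then {i, i + 1} else {p + 1}

/-- `B`-entries of the matrix obtained by merging rows/columns `i` and `i+1`. -/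
def mergeB (i : ℕ) (β : ℕ → ℕ → B) : ℕ → ℕ → B :=
  fun p q => ∏ u ∈ preim i p, ∏ v ∈ preim i q, β u v

/-- Diagonal of the "cyclic merge": `a_m a_0 ε(b_{0,m})` in position `0`
(top index `m`). -/
def cmergeA (ε : B →ₐ[k] A) (m : ℕ) (a : ℕ → A) (β : ℕ → ℕ → B) : ℕ → A :=
  fun j => if j = 0 then a m * a 0 * ε (β 0 m) else a j

/-- `B`-entries of the cyclic merge: first row becomes `b_{q,m} b_{0,q}`. -/
def cmergeB (m : ℕ) (β : ℕ → ℕ → B) : ℕ → ℕ → B :=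
  fun p q => if p = 0 then β q m * β 0 q else β p q

/-- Diagonal of the cyclically rotated matrix: `a_n` moves to position `0`. -/
def rotA (n : ℕ) (a : ℕ → A) : ℕ → A :=
  fun j => if j = 0 then a n else a (j - 1)

/-- `B`-entries of the cyclically rotated matrix: the first row becomes
`b_{0,n}, …, b_{n-1,n}`. -/
def rotB (n : ℕ) (β : ℕ → ℕ → B) : ℕ → ℕ → B :=
  fun p q => if p = 0 then β (q - 1) n else β (p - 1) (q - 1)

/-!
Both sides are linear functionals on `TS k A B (n + 2)`, so it suffices to compare them on
generators `T`. Appending a unit diagonal entry and a column of units commutes with the merges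
`i < n + 1`, so these terms of `s (b' φ)` and `b' (s φ)` cancel, having opposite signs. The
remaining merge `i = n + 1` fuses the last entry of `T` with the appended unit and gives back
`T`, with sign `(-1) ^ (2 (n + 1)) = 1`. Here `s n : C^{n+1} → C^n` is the paper's `s_{n+1}`.
-/

def extA {A : Type} [One A] (n : ℕ) (a : ℕ → A) : ℕ → A :=
  fun j => if j < n then a j else 1

def extB {B : Type} [One B] (n : ℕ) (β : ℕ → ℕ → B) : ℕ → ℕ → B :=
  fun p q => if q < n then β p q else 1

lemma le_succ_of_mem_preim {i p u : ℕ} (hu : u ∈ preim i p) : u ≤ p + 1 := by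
  unfold preim at hu
  split_ifs at hu <;> simp only [Finset.mem_singleton, Finset.mem_insert] at hu <;> omega

lemma preim_of_lt {i p : ℕ} (h : i < p) : preim i p = {p + 1} := by
  rw [preim, if_neg (by omega), if_neg (by omega)]

lemma neg_one_pow_succ_smul_add_sum_eq {M : Type*} [AddCommGroup M] (n : ℕ) (x : ℕ → M)
    (v : M) :
    (-1 : ℤ) ^ (n + 1) •
        (∑ i ∈ Finset.range (n + 1), (-1 : ℤ) ^ i • x i + (-1 : ℤ) ^ (n + 1) • v) +
      ∑ i ∈ Finset.range (n + 1), (-1 : ℤ) ^ i • (-1 : ℤ) ^ n • x i = v := by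
  have hcancel : ∀ i,
      (-1 : ℤ) ^ (n + 1) • (-1 : ℤ) ^ i • x i + (-1 : ℤ) ^ i • (-1 : ℤ) ^ n • x i = 0 := by
    intro i
    rw [smul_smul, smul_smul, ← add_smul, pow_succ]
    simp [mul_comm]
  rw [smul_add, smul_smul, ← pow_add, Even.neg_one_pow ⟨n + 1, rfl⟩, one_smul, Finset.smul_sum,
    add_right_comm, ← Finset.sum_add_distrib, Finset.sum_eq_zero fun i _ => hcancel i, zero_add]

section

variable {k A B}

lemma mergeA_extA {ε : B →ₐ[k] A} {i m : ℕ} (hi : i < m) (a : ℕ → A) (β : ℕ → ℕ → B) :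
    mergeA k A B ε i (extA (m + 1) a) (extB (m + 1) β) = extA m (mergeA k A B ε i a β) := by
  funext j
  simp only [mergeA, extA, extB]
  split_ifs <;> first | rfl | omega

lemma mergeB_extB {i m : ℕ} (hi : i < m) (β : ℕ → ℕ → B) :
    mergeB B i (extB (m + 1) β) = extB m (mergeB B i β) := by
  funext p q
  simp only [mergeB, extB]
  split_ifs with hq
  · refine Finset.prod_congr rfl fun u _ => Finset.prod_congr rfl fun v hv => ?_
    rw [if_pos (by have := le_succ_of_mem_preim hv; omega)]
  · rw [preim_of_lt (p := q) (by omega)]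
    simp [hq]

lemma gen_congr {m : ℕ} {a a' : ℕ → A} {β β' : ℕ → ℕ → B}
    (ha : ∀ j < m, a j = a' j) (hβ : ∀ p q, p < q → q < m → β p q = β' p q) :
    gen k A B m a β = gen k A B m a' β' := by
  unfold gen
  congr 2 with x
  · exact ha x x.2
  · exact hβ _ _ x.2 x.1.2.2

lemma gen_merge_extend_last {ε : B →ₐ[k] A} {m : ℕ} (a : ℕ → A) (β : ℕ → ℕ → B) :
    gen k A B (m + 1) (mergeA k A B ε m (extA (m + 1) a) (extB (m + 1) β))
      (mergeB B m (extB (m + 1) β)) = gen k A B (m + 1) a β := by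
  apply gen_congr
  · intro j hj
    simp only [mergeA, extA, extB]
    split_ifs <;> first | omega | simp_all
  · intro p q hpq hq
    simp only [mergeB, extB]
    rw [preim, if_pos (by omega : p < m)]
    rcases Nat.lt_succ_iff_lt_or_eq.1 hq with hq | rfl
    · rw [preim, if_pos hq, Finset.prod_singleton, Finset.prod_singleton,
        if_pos (by omega)]
    · rw [preim, if_neg (lt_irrefl q), if_pos rfl, Finset.prod_singleton,
        Finset.prod_pair (by omega), if_pos (by omega), if_neg (by omega), mul_one]

lemma exists_gen_eq_tmul {m : ℕ} (f : Fin m → A) (g : UT m → B) :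
    ∃ a β, gen k A B m a β = tprod k f ⊗ₜ[k] tprod k g := by
  refine ⟨fun j => if hj : j < m then f ⟨j, hj⟩ else 1,
    fun p q => if hpq : p < q ∧ q < m then
      g ⟨(⟨p, hpq.1.trans hpq.2⟩, ⟨q, hpq.2⟩), hpq.1⟩ else 1, ?_⟩
  unfold gen
  congr 2 with x
  · simp
  · simp [x.2]

lemma ext_of_gen {m : ℕ} {F G : TS k A B m →ₗ[k] k}
    (h : ∀ a β, F (gen k A B m a β) = G (gen k A B m a β)) : F = G := by
  refine TensorProduct.ext (PiTensorProduct.ext (MultilinearMap.ext fun f => ?_))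
  refine PiTensorProduct.ext (MultilinearMap.ext fun g => ?_)
  obtain ⟨a, β, hgen⟩ := exists_gen_eq_tmul (k := k) f g
  change F (tprod k f ⊗ₜ[k] tprod k g) = G (tprod k f ⊗ₜ[k] tprod k g)
  rw [← hgen]
  exact h a β

end

theorem secondary_truncated_complex_contracting_homotopy
    (ε : B →ₐ[k] A)
    (btr : ∀ n : ℕ, Cc k A B n →ₗ[k] Cc k A B (n + 1))
    (hbtr : ∀ (n : ℕ) (φ : Cc k A B n) (a : ℕ → A) (β : ℕ → ℕ → B),
      btr n φ (gen k A B (n + 2) a β) =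
        ∑ i ∈ Finset.range (n + 1), (-1 : ℤ) ^ i •
            φ (gen k A B (n + 1) (mergeA k A B ε i a β) (mergeB B i β)))
    (s : ∀ n : ℕ, Cc k A B (n + 1) →ₗ[k] Cc k A B n)
    (hs : ∀ (n : ℕ) (φ : Cc k A B (n + 1)) (a : ℕ → A) (β : ℕ → ℕ → B),
      s n φ (gen k A B (n + 1) a β) =
        (-1 : ℤ) ^ n • φ (gen k A B (n + 2)
          (fun j => if j < n + 1 then a j else 1)
          (fun p q => if q < n + 1 then β p q else 1))) :
    ∀ (n : ℕ) (φ : Cc k A B (n + 1)),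
      s (n + 1) (btr (n + 1) φ) + btr n (s n φ) = φ := by
  intro n φ
  refine ext_of_gen fun a β => ?_
  have hs_ext : ∀ m (ψ : Cc k A B (m + 1)) a β, s m ψ (gen k A B (m + 1) a β) =
      (-1 : ℤ) ^ m • ψ (gen k A B (m + 2) (extA (m + 1) a) (extB (m + 1) β)) := hs
  rw [LinearMap.add_apply, hs_ext, hbtr, hbtr, Finset.sum_range_succ, gen_merge_extend_last]
  simp only [hs_ext]
  rw [Finset.sum_congr rfl fun i hi => by
    rw [mergeA_extA (Finset.mem_range.1 hi), mergeB_extB (Finset.mem_range.1 hi)]]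
  exact neg_one_pow_succ_smul_add_sum_eq n _ _

end
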